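/- arXiv:2210.00977 — 3 statements merged into one kernel-verified Lean document; each statement's English description precedes it below -/
import Mathlib

section
/- Let Z_1, ..., Z_k be independent exponential random variables with rate 1 and let x_1, ..., x_k be real numbers. Then E[(x_1 Z_1 + ⋯ + x_k Z_k)^{2d}] = (2d)! · h_{2d}(x_1, ..., x_k), where h_{2d} is the complete homogeneous symmetric polynomial of degree 2d. -/
/-!
Expand `(∑ xᵢ Zᵢ)^m` by the multinomial theorem. By independence each monomial integrates to
`∏ xᵢ^ℓᵢ E[Zᵢ^ℓᵢ]`, and the exponential moments `E[Z^ℓ] = ℓ!` cancel the multinomial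
coefficient `m! / ∏ ℓᵢ!`, leaving `m!` times the sum of all monomials of degree `m`.
-/

open MeasureTheory ProbabilityTheory

/-- The complete homogeneous symmetric polynomial of degree `d` in `k` real variables. -/
noncomputable def hSym (k d : ℕ) (x : Fin k → ℝ) : ℝ :=
  ∑ ℓ ∈ Finset.Nat.antidiagonalTuple k d, ∏ i, x i ^ ℓ i

open Real Set in
lemma integral_pow_expMeasure {r : ℝ} (hr : 0 < r) (t : ℕ) :
    ∫ z, z ^ t ∂expMeasure r = t.factorial / r ^ t := by
  have hmeas : Measurable (exponentialPDF r) := (measurable_gammaPDFReal 1 r).ennreal_ofReal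
  have hdens : (fun z => (exponentialPDF r z).toReal • z ^ t) =
      (Ici 0).indicator fun z => r * (z ^ t * exp (-(r * z))) := by
    ext z
    by_cases hz : 0 ≤ z <;> simp [exponentialPDF_eq, hz, hr.le, (exp_pos _).le]
    ring
  have hGamma : ∫ z in Ioi 0, z ^ t * exp (-(r * z)) = t.factorial / r ^ (t + 1) := by
    have := integral_rpow_mul_exp_neg_mul_Ioi (a := t + 1) (by positivity) hr
    rw [add_sub_cancel_right, Gamma_nat_eq_factorial, one_div, inv_rpow hr.le] at this
    norm_cast at this
    simpa [div_eq_inv_mul] using this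
  rw [show expMeasure r = volume.withDensity (exponentialPDF r) from rfl,
    integral_withDensity_eq_integral_toReal_smul hmeas
      (ae_of_all _ fun _ => ENNReal.ofReal_lt_top),
    hdens, integral_indicator measurableSet_Ici, integral_Ici_eq_integral_Ioi,
    integral_const_mul, hGamma]
  field_simp
  ring

lemma integrable_pow_expMeasure {r : ℝ} (hr : 0 < r) (t : ℕ) :
    Integrable (fun z : ℝ => z ^ t) (expMeasure r) :=
  .of_integral_ne_zero (by rw [integral_pow_expMeasure hr]; positivity)

open Finset

theorem integral_pi_sum_mul_pow {ι : Type*} [Fintype ι] [DecidableEq ι] {μ : ι → Measure ℝ}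
    [∀ i, SigmaFinite (μ i)] (hμ : ∀ i t, Integrable (fun z : ℝ => z ^ t) (μ i))
    (x : ι → ℝ) (m : ℕ) :
    ∫ z, (∑ i, x i * z i) ^ m ∂Measure.pi μ =
      ∑ ℓ ∈ univ.piAntidiag m, Nat.multinomial univ ℓ * ∏ i, x i ^ ℓ i * ∫ z, z ^ ℓ i ∂μ i := by
  simp_rw [sum_pow_eq_sum_piAntidiag, mul_pow]
  have hmonomial : ∀ ℓ : ι → ℕ,
      Integrable (fun z : ι → ℝ => ∏ i, x i ^ ℓ i * z i ^ ℓ i) (Measure.pi μ) := fun ℓ =>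
    Integrable.fintype_prod (f := fun i z => x i ^ ℓ i * z ^ ℓ i)
      fun i => (hμ i (ℓ i)).const_mul _
  rw [integral_finsetSum _ fun ℓ _ => (hmonomial ℓ).const_mul _]
  refine sum_congr rfl fun ℓ _ => ?_
  rw [integral_const_mul, integral_fintype_prod_eq_prod (fun i z => x i ^ ℓ i * z ^ ℓ i)]
  simp only [integral_const_mul]

theorem integral_pi_expMeasure_sum_mul_pow {ι : Type*} [Fintype ι] [DecidableEq ι] {r : ℝ}
    (hr : 0 < r) (x : ι → ℝ) (m : ℕ) :
    ∫ z, (∑ i, x i * z i) ^ m ∂Measure.pi (fun _ : ι => expMeasure r) =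
      m.factorial / r ^ m * ∑ ℓ ∈ univ.piAntidiag m, ∏ i, x i ^ ℓ i := by
  have := isProbabilityMeasure_expMeasure hr
  rw [integral_pi_sum_mul_pow (fun _ => integrable_pow_expMeasure hr), mul_sum]
  refine sum_congr rfl fun ℓ hℓ => ?_
  have hsum : ∑ i, ℓ i = m := (mem_piAntidiag.mp hℓ).1
  have hfac : (Nat.multinomial univ ℓ : ℝ) * ∏ i, ((ℓ i).factorial : ℝ) = m.factorial := by
    rw [← hsum, ← Nat.multinomial_spec]
    push_cast
    ring
  simp only [integral_pow_expMeasure hr, prod_mul_distrib, prod_div_distrib,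
    prod_pow_eq_pow_sum, hsum, ← hfac]
  ring

/-- If `Z_1, …, Z_k` are i.i.d. rate-1 exponential random variables, then
`E[(x_1 Z_1 + ⋯ + x_k Z_k)^{2d}] = (2d)! ⬝ h_{2d}(x_1, …, x_k)`. -/
theorem integral_exponential_pow_eq_hSym (k d : ℕ) (x : Fin k → ℝ) :
    ∫ z : Fin k → ℝ, (∑ i, x i * z i) ^ (2 * d)
        ∂(Measure.pi fun _ : Fin k => expMeasure 1) =
      (Nat.factorial (2 * d) : ℝ) * hSym k (2 * d) x := by
  rw [integral_pi_expMeasure_sum_mul_pow one_pos, one_pow, div_one, hSym,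
    piAntidiag_univ_fin_eq_antidiagonalTuple]
end

section
/- Let k ≥ 1 be an integer and let x_1, ..., x_k be real numbers with mean x̄. If y_1, ..., y_k and x_1, ..., x_k satisfy that (x_1, ..., x_k) majorises (y_1, ..., y_k) (both sorted in decreasing order, partial sums of x dominate those of y, with equal total sums), then h_{2d}(x_1, ..., x_k) ≥ h_{2d}(y_1, ..., y_k) for every integer d ≥ 1 (Schur convexity of complete homogeneous symmetric polynomials of even degree). -/
open MeasureTheory ProbabilityTheory Real Nat Finset

lemma expMeasure_one_eq_withDensity :
    expMeasure 1 =
      (volume.restrict (Set.Ici 0)).withDensity fun t => ENNReal.ofReal (exp (-t)) := by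
  rw [expMeasure, gammaMeasure, ← withDensity_indicator measurableSet_Ici]
  congr 1; ext t
  by_cases ht : 0 ≤ t <;> simp [gammaPDF_eq, ht]

instance : IsProbabilityMeasure (expMeasure 1) := isProbabilityMeasure_expMeasure one_pos

lemma integrable_pow_expMeasure_one (n : ℕ) : Integrable (fun t => t ^ n) (expMeasure 1) := by
  rw [expMeasure_one_eq_withDensity, integrable_withDensity_iff_integrable_smul₀' (by fun_prop)
    (by simp)]
  simp only [ENNReal.toReal_ofReal (exp_pos _).le, smul_eq_mul]
  refine (integrableOn_Ici_iff_integrableOn_Ioi (f := fun t : ℝ => exp (-t) * t ^ n)).2 ?_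
  refine (GammaIntegral_convergent (s := n + 1) (by positivity)).congr_fun (fun t _ => ?_)
    measurableSet_Ioi
  simp [← rpow_natCast]

lemma integral_pow_expMeasure_one (n : ℕ) : ∫ t, t ^ n ∂expMeasure 1 = n ! := by
  rw [expMeasure_one_eq_withDensity,
    integral_withDensity_eq_integral_toReal_smul₀ (by fun_prop) (by simp)]
  simp only [ENNReal.toReal_ofReal (exp_pos _).le, smul_eq_mul]
  rw [integral_Ici_eq_integral_Ioi, ← Gamma_nat_eq_factorial, Gamma_eq_integral (by positivity)]
  simp [← rpow_natCast]

lemma pow_sum_mul_eq_sum_antidiagonalTuple {k : ℕ} (x t : Fin k → ℝ) (n : ℕ) :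
    (∑ i, x i * t i) ^ n = ∑ a ∈ Nat.antidiagonalTuple k n,
      (Nat.multinomial univ a * ∏ i, x i ^ a i) * ∏ i, t i ^ a i := by
  rw [sum_pow_eq_sum_piAntidiag, piAntidiag_univ_fin_eq_antidiagonalTuple]
  simp_rw [mul_pow, prod_mul_distrib, mul_assoc]

lemma integrable_prod_pow_expMeasure_one {k : ℕ} (a : Fin k → ℕ) :
    Integrable (fun t : Fin k → ℝ => ∏ i, t i ^ a i) (Measure.pi fun _ => expMeasure 1) :=
  Integrable.fintype_prod fun i => integrable_pow_expMeasure_one (a i)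

lemma integrable_pow_sum_mul_pi_expMeasure {k : ℕ} (x : Fin k → ℝ) (n : ℕ) :
    Integrable (fun t => (∑ i, x i * t i) ^ n) (Measure.pi fun _ : Fin k => expMeasure 1) := by
  simp_rw [pow_sum_mul_eq_sum_antidiagonalTuple]
  exact integrable_finsetSum _ fun a _ => (integrable_prod_pow_expMeasure_one a).const_mul _

theorem integral_pow_sum_mul_eq_factorial_mul_hSym {k : ℕ} (x : Fin k → ℝ) (n : ℕ) :
    ∫ t, (∑ i, x i * t i) ^ n ∂(Measure.pi fun _ : Fin k => expMeasure 1) =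
      n ! * hSym k n x := by
  simp_rw [pow_sum_mul_eq_sum_antidiagonalTuple]
  rw [integral_finsetSum _ fun a _ => (integrable_prod_pow_expMeasure_one a).const_mul _,
    hSym, mul_sum]
  refine sum_congr rfl fun a ha => ?_
  rw [Nat.mem_antidiagonalTuple] at ha
  rw [integral_const_mul, integral_fintype_prod_eq_prod (fun i t => t ^ a i)]
  simp_rw [integral_pow_expMeasure_one]
  rw [← ha, ← Nat.multinomial_spec]
  push_cast
  ring

lemma ConvexOn.integral {E Ω : Type*} [AddCommMonoid E] [Module ℝ E] [MeasurableSpace Ω]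
    {μ : Measure Ω} {s : Set E} {g : E → Ω → ℝ} (hconv : ∀ ω, ConvexOn ℝ s (g · ω))
    (hint : ∀ x ∈ s, Integrable (g x) μ) (hs : Convex ℝ s) :
    ConvexOn ℝ s fun x => ∫ ω, g x ω ∂μ := by
  refine ⟨hs, fun x hx y hy a b ha hb hab => ?_⟩
  calc ∫ ω, g (a • x + b • y) ω ∂μ ≤ ∫ ω, a * g x ω + b * g y ω ∂μ :=
        integral_mono (hint _ (hs hx hy ha hb hab))
          (((hint x hx).const_mul a).add ((hint y hy).const_mul b))
          fun ω => (hconv ω).2 hx hy ha hb hab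
    _ = a • ∫ ω, g x ω ∂μ + b • ∫ ω, g y ω ∂μ := by
        rw [integral_add ((hint x hx).const_mul a) ((hint y hy).const_mul b),
          integral_const_mul, integral_const_mul, smul_eq_mul, smul_eq_mul]

theorem convexOn_hSym_two_mul (k d : ℕ) : ConvexOn ℝ Set.univ (hSym k (2 * d)) := by
  have hrepr : hSym k (2 * d) = fun x => ((2 * d) ! : ℝ)⁻¹ •
      ∫ t, (∑ i, x i * t i) ^ (2 * d) ∂(Measure.pi fun _ : Fin k => expMeasure 1) := by
    ext x
    rw [integral_pow_sum_mul_eq_factorial_mul_hSym, smul_eq_mul,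
      inv_mul_cancel_left₀ (by positivity)]
  rw [hrepr]
  refine ConvexOn.smul (by positivity) (ConvexOn.integral (fun t => ?_)
    (fun x _ => integrable_pow_sum_mul_pi_expMeasure x _) convex_univ)
  simpa [Function.comp_def, Fintype.linearCombination_apply] using
    (Even.convexOn_pow (even_two_mul d)).comp_linearMap (Fintype.linearCombination ℝ t)

theorem hSym_comp_perm (k n : ℕ) (x : Fin k → ℝ) (σ : Equiv.Perm (Fin k)) :
    hSym k n (x ∘ σ) = hSym k n x := by
  refine sum_nbij' (fun ℓ => ℓ ∘ σ.symm) (fun ℓ => ℓ ∘ σ) ?_ ?_ ?_ ?_ ?_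
  all_goals simp [Nat.mem_antidiagonalTuple, Function.comp_def, Equiv.sum_comp]
  intro ℓ _
  simpa using Equiv.prod_comp σ fun i => x i ^ ℓ (σ.symm i)

section RobinHood

variable {ι : Type*} [DecidableEq ι]

def robinHood (x : ι → ℝ) (i j : ι) (δ : ℝ) : ι → ℝ :=
  x - Pi.single i δ + Pi.single j δ

lemma robinHood_apply (x : ι → ℝ) (i j : ι) (δ : ℝ) (m : ι) :
    robinHood x i j δ m = x m - (if m = i then δ else 0) + (if m = j then δ else 0) := by
  simp [robinHood, Pi.single_apply]

lemma sum_robinHood (x : ι → ℝ) (i j : ι) (δ : ℝ) (s : Finset ι) :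
    ∑ m ∈ s, robinHood x i j δ m
      = ∑ m ∈ s, x m - (if i ∈ s then δ else 0) + (if j ∈ s then δ else 0) := by
  simp [robinHood, sum_add_distrib, sum_sub_distrib, sum_pi_single']

lemma ConvexOn.le_of_robinHood {f : (ι → ℝ) → ℝ} (hf : ConvexOn ℝ Set.univ f)
    (hsymm : ∀ x (σ : Equiv.Perm ι), f (x ∘ σ) = f x) {x : ι → ℝ} {i j : ι}
    (hij : i ≠ j) {δ : ℝ} (hδ : 0 ≤ δ) (hδx : δ ≤ x i - x j) :
    f (robinHood x i j δ) ≤ f x := by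
  set θ := δ / (x i - x j)
  -- if `x i = x j` then `θ = δ / 0 = 0`, which is still right since then `δ = 0`
  have hθ : θ * (x i - x j) = δ := by
    rcases (hδ.trans hδx).eq_or_lt with h | h
    · simp only [θ, ← h, div_zero, zero_mul]; linarith
    · exact div_mul_cancel₀ δ h.ne'
  have hθ0 : 0 ≤ θ := div_nonneg hδ (hδ.trans hδx)
  have hθ1 : θ ≤ 1 := div_le_one_of_le₀ hδx (hδ.trans hδx)
  clear_value θ
  have hseg : robinHood x i j δ = (1 - θ) • x + θ • (x ∘ Equiv.swap i j) := by
    ext m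
    by_cases hmi : m = i
    · subst hmi; simp [robinHood_apply, hij]; linear_combination hθ
    by_cases hmj : m = j
    · subst hmj; simp [robinHood_apply, hmi]; linear_combination -hθ
    · simp [robinHood_apply, hmi, hmj, Equiv.swap_apply_of_ne_of_ne]; ring
  calc f (robinHood x i j δ) ≤ (1 - θ) • f x + θ • f (x ∘ Equiv.swap i j) :=
        hseg ▸ hf.2 trivial trivial (by linarith) hθ0 (by ring)
    _ = f x := by rw [hsymm, smul_eq_mul, smul_eq_mul]; ring

end RobinHood

section Majorizes

variable {k : ℕ}

def partialSum (x : Fin k → ℝ) (m : ℕ) : ℝ :=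
  ∑ i ∈ univ.filter (fun i : Fin k => (i : ℕ) < m), x i

def Majorizes (x y : Fin k → ℝ) : Prop :=
  (∀ m, partialSum y m ≤ partialSum x m) ∧ ∑ i, x i = ∑ i, y i

lemma Majorizes.exists_gain_before_first_loss {x y : Fin k → ℝ} (hxy : Majorizes x y)
    (hne : x ≠ y) : ∃ j l, j < l ∧ y j < x j ∧ x l < y l ∧ ∀ i < l, y i ≤ x i := by
  have hloss : {l | x l < y l}.Nonempty := by
    by_contra! h
    refine hne (funext fun i => ?_)
    have hle : ∀ i ∈ univ, y i ≤ x i := fun i _ => not_lt.1 fun hi => h.subset hi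
    exact ((sum_eq_sum_iff_of_le hle).1 hxy.2.symm i (mem_univ i)).symm
  obtain ⟨l, hl, hfirst⟩ := wellFounded_lt.has_min _ hloss
  have hbefore : ∀ i < l, y i ≤ x i := fun i hi => not_lt.1 fun h => hfirst i h hi
  obtain ⟨j, hjl, hj⟩ : ∃ j < l, y j < x j := by
    by_contra! h
    refine (hxy.1 (l + 1)).not_gt (sum_lt_sum (fun i hi => ?_) ⟨l, by simp, hl⟩)
    rcases lt_or_eq_of_le (Fin.le_def.2 (Nat.lt_succ_iff.1 (mem_filter.1 hi).2)) with hi | rfl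
    · exact h i hi
    · exact hl.le
  exact ⟨j, l, hjl, hj, hl, hbefore⟩

lemma Majorizes.robinHood {x y : Fin k → ℝ} (hxy : Majorizes x y) {j l : Fin k} (hjl : j < l)
    {δ : ℝ} (hj : y j ≤ x j - δ) (hbefore : ∀ i < l, y i ≤ x i) :
    Majorizes (robinHood x j l δ) y := by
  refine ⟨fun m => ?_, by rw [sum_robinHood]; simpa using hxy.2⟩
  by_cases hm : (l : ℕ) < m
  · have hjm : (j : ℕ) < m := lt_trans hjl hm
    have hxym := hxy.1 m
    simp only [partialSum] at hxym ⊢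
    rw [sum_robinHood]
    simpa [hm, hjm] using hxym
  · refine sum_le_sum fun i hi => ?_
    have hil : i < l := Fin.lt_def.2 (by have := (mem_filter.1 hi).2; omega)
    rw [robinHood_apply, if_neg hil.ne]
    by_cases hij : i = j
    · subst hij; simpa using hj
    · simpa [hij] using hbefore i hil

lemma card_ne_robinHood_lt {x y : Fin k → ℝ} {j l : Fin k} (hjl : j ≠ l) (hj : x j ≠ y j)
    (hl : x l ≠ y l) {δ : ℝ} (hδ : x j - δ = y j ∨ x l + δ = y l) :
    #{i | robinHood x j l δ i ≠ y i} < #{i | x i ≠ y i} := by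
  refine card_lt_card ((ssubset_iff_of_subset fun i hi => ?_).2 ?_)
  · by_cases hij : i = j
    · simpa [hij] using hj
    by_cases hil : i = l
    · simpa [hil] using hl
    · simpa [robinHood_apply, hij, hil] using hi
  · rcases hδ with h | h
    · exact ⟨j, by simpa using hj, by simp [robinHood_apply, hjl, h]⟩
    · exact ⟨l, by simpa using hl, by simp [robinHood_apply, hjl.symm, h]⟩

theorem ConvexOn.le_of_majorizes {f : (Fin k → ℝ) → ℝ} (hf : ConvexOn ℝ Set.univ f)
    (hsymm : ∀ x (σ : Equiv.Perm (Fin k)), f (x ∘ σ) = f x) {x y : Fin k → ℝ}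
    (hy : Antitone y) (hxy : Majorizes x y) : f y ≤ f x := by
  induction hN : #{i | x i ≠ y i} using Nat.strong_induction_on generalizing x with
  | _ N ih =>
  by_cases hne : x = y
  · rw [hne]
  obtain ⟨j, l, hjl, hj, hl, hbefore⟩ := hxy.exists_gain_before_first_loss hne
  set δ := min (x j - y j) (y l - x l)
  have hδj : δ ≤ x j - y j := min_le_left _ _
  have hδl : δ ≤ y l - x l := min_le_right _ _
  have hδ : x j - δ = y j ∨ x l + δ = y l := by
    rcases min_choice (x j - y j) (y l - x l) with h | h <;> [left; right] <;> linarith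
  have hlt := card_ne_robinHood_lt hjl.ne hj.ne' hl.ne hδ
  calc f y ≤ f (robinHood x j l δ) :=
        ih _ (hN ▸ hlt) (hxy.robinHood hjl (by linarith) hbefore) rfl
    _ ≤ f x := hf.le_of_robinHood hsymm hjl.ne (le_min (by linarith) (by linarith))
        (by linarith [hy hjl.le])

end Majorizes

theorem hSym_schur_convex_general (k : ℕ) (x y : Fin k → ℝ)
    (hy : Antitone y)
    (hmaj : ∀ j : ℕ, j < k →
      ∑ i ∈ Finset.univ.filter (fun i : Fin k => (i : ℕ) < j), y i ≤
        ∑ i ∈ Finset.univ.filter (fun i : Fin k => (i : ℕ) < j), x i)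
    (hsum : ∑ i, x i = ∑ i, y i)
    (d : ℕ) :
    hSym k (2 * d) y ≤ hSym k (2 * d) x := by
  refine (convexOn_hSym_two_mul k d).le_of_majorizes (hSym_comp_perm k _) hy ⟨fun m => ?_, hsum⟩
  by_cases hm : m < k
  · exact hmaj m hm
  · have hall : univ.filter (fun i : Fin k => (i : ℕ) < m) = univ :=
      filter_true_of_mem fun i _ => i.isLt.trans_le (not_lt.1 hm)
    simp only [partialSum, hall, hsum, le_refl]

/-- Schur convexity of complete homogeneous symmetric polynomials of even degree:
if `(x_1, …, x_k)` majorises `(y_1, …, y_k)` (both sorted decreasingly), then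
`h_{2d}(x) ≥ h_{2d}(y)`. -/
theorem hSym_schur_convex (k : ℕ) (hk : 1 ≤ k) (x y : Fin k → ℝ)
    (hx : Antitone x) (hy : Antitone y)
    (hmaj : ∀ j : ℕ, j < k →
      ∑ i ∈ Finset.univ.filter (fun i : Fin k => (i : ℕ) < j), y i ≤
        ∑ i ∈ Finset.univ.filter (fun i : Fin k => (i : ℕ) < j), x i)
    (hsum : ∑ i, x i = ∑ i, y i)
    (d : ℕ) (hd : 1 ≤ d) :
    hSym k (2 * d) y ≤ hSym k (2 * d) x :=
  hSym_schur_convex_general k x y hy hmaj hsum d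
end

section
/- Let m ≥ 2 be an integer and let X be a real random variable with finitely many values and mean μ = E[X]. Then Σ_{d=1}^{⌊m/2⌋} Σ over nonnegative integer tuples (ℓ_1,...,ℓ_{m-2d+1}) summing to 2d of (Π_i E[X^{ℓ_i}] − μ^{2d}) ≥ 0. -/
/-!
Write `h_e(x) = ∑_{ℓ_1+⋯+ℓ_n = e} ∏_i x_i^{ℓ_i}` for the complete homogeneous symmetric
polynomial. For i.i.d. copies `X_1, …, X_n` of `X`, the inner sum over compositions `ℓ` of `2d`
equals `E[h_{2d}(X_1, …, X_n)] - h_{2d}(μ, …, μ)`, so it is nonnegative by Jensen's inequality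
as soon as `h_e` is convex for even `e`. Convexity comes from the representation
`e! h_e(x) = E[(∑_i Y_i x_i)^e]` with `Y_i` i.i.d. standard exponential (so `E[Y^k] = k!`),
which exhibits `h_e` as an average of even powers of linear forms.
-/

open scoped Nat
open MeasureTheory ProbabilityTheory Real Set Finset

namespace ProbabilityTheory

lemma exponentialPDFReal_eq (r x : ℝ) :
    exponentialPDFReal r x = if 0 ≤ x then r * exp (-(r * x)) else 0 := by
  simp [exponentialPDFReal, gammaPDFReal]

lemma integral_pow_expMeasure {r : ℝ} (hr : 0 < r) (k : ℕ) :
    ∫ y, y ^ k ∂expMeasure r = k ! / r ^ k := by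
  have hdens : expMeasure r =
      volume.withDensity fun x => ((exponentialPDFReal r x).toNNReal : ENNReal) := rfl
  have hGamma := integral_rpow_mul_exp_neg_mul_Ioi (a := k + 1) (by positivity) hr
  rw [add_sub_cancel_right, Gamma_nat_eq_factorial, ← Nat.cast_succ] at hGamma
  simp only [rpow_natCast] at hGamma
  calc ∫ y, y ^ k ∂expMeasure r
      = ∫ x, exponentialPDFReal r x * x ^ k := by
        rw [hdens, integral_withDensity_eq_integral_smul
          (measurable_exponentialPDFReal r).real_toNNReal]
        congr 1 with x
        rw [NNReal.smul_def, Real.coe_toNNReal _ (exponentialPDFReal_nonneg hr x), smul_eq_mul]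
    _ = ∫ x in Ioi 0, r * (x ^ k * exp (-(r * x))) := by
        rw [← setIntegral_eq_integral_of_forall_compl_eq_zero (s := Ici 0) fun x hx => by
          rw [exponentialPDFReal_eq, if_neg (notMem_Ici.mp hx).not_ge, zero_mul],
          integral_Ici_eq_integral_Ioi]
        refine setIntegral_congr_fun measurableSet_Ioi fun x (hx : 0 < x) => ?_
        rw [exponentialPDFReal_eq, if_pos hx.le]
        ring
    _ = k ! / r ^ k := by
        rw [integral_const_mul, hGamma, one_div, inv_pow, pow_succ]
        field_simp

variable {ι : Type*} [Fintype ι]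

lemma integral_prod_pow_pi_expMeasure {r : ℝ} (hr : 0 < r) (ℓ : ι → ℕ) :
    ∫ y, ∏ i, y i ^ ℓ i ∂Measure.pi (fun _ : ι => expMeasure r) =
      ∏ i, (ℓ i)! / r ^ ℓ i := by
  have := isProbabilityMeasure_expMeasure hr
  rw [integral_fintype_prod_eq_prod (fun i (t : ℝ) => t ^ ℓ i)]
  exact prod_congr rfl fun i _ => integral_pow_expMeasure hr (ℓ i)

lemma integrable_prod_pow_pi_expMeasure {r : ℝ} (hr : 0 < r) (ℓ : ι → ℕ) :
    Integrable (fun y => ∏ i, y i ^ ℓ i) (Measure.pi fun _ : ι => expMeasure r) :=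
  .of_integral_ne_zero <| by rw [integral_prod_pow_pi_expMeasure hr]; positivity

end ProbabilityTheory

section CompleteHomogeneous

variable {ι : Type*} [Fintype ι] [DecidableEq ι]

def completeHomogeneous (e : ℕ) (x : ι → ℝ) : ℝ :=
  ∑ ℓ ∈ piAntidiag univ e, ∏ i, x i ^ ℓ i

lemma sum_mul_pow_eq_sum_piAntidiag (x y : ι → ℝ) (e : ℕ) :
    (∑ i, y i * x i) ^ e =
      ∑ ℓ ∈ piAntidiag univ e,
        (Nat.multinomial univ ℓ * ∏ i, x i ^ ℓ i) * ∏ i, y i ^ ℓ i := by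
  rw [sum_pow_eq_sum_piAntidiag]
  refine sum_congr rfl fun ℓ _ => ?_
  simp only [mul_pow, prod_mul_distrib]
  ring

lemma integrable_sum_mul_pow (x : ι → ℝ) (e : ℕ) :
    Integrable (fun y => (∑ i, y i * x i) ^ e) (Measure.pi fun _ : ι => expMeasure 1) := by
  simp only [sum_mul_pow_eq_sum_piAntidiag x _ e]
  exact integrable_finsetSum _ fun ℓ _ =>
    (integrable_prod_pow_pi_expMeasure one_pos ℓ).const_mul _

lemma integral_sum_mul_pow (x : ι → ℝ) (e : ℕ) :
    ∫ y, (∑ i, y i * x i) ^ e ∂Measure.pi (fun _ : ι => expMeasure 1) =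
      e ! * completeHomogeneous e x := by
  simp only [sum_mul_pow_eq_sum_piAntidiag x _ e, completeHomogeneous, mul_sum]
  rw [integral_finsetSum _ fun ℓ _ => (integrable_prod_pow_pi_expMeasure one_pos ℓ).const_mul _]
  refine sum_congr rfl fun ℓ hℓ => ?_
  rw [integral_const_mul, integral_prod_pow_pi_expMeasure one_pos]
  have hfac : (∏ i, ((ℓ i)! : ℝ)) * Nat.multinomial univ ℓ = e ! := by
    rw [← (mem_piAntidiag.mp hℓ).1]
    exact_mod_cast Nat.multinomial_spec univ ℓ
  simp only [one_pow, div_one]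
  linear_combination (∏ i, x i ^ ℓ i) * hfac

lemma convexOn_completeHomogeneous {e : ℕ} (he : Even e) :
    ConvexOn ℝ univ (completeHomogeneous (ι := ι) e) := by
  refine ⟨convex_univ, fun x _ x' _ a b ha hb hab => ?_⟩
  have hpoint (y : ι → ℝ) : (∑ i, y i * (a • x + b • x') i) ^ e ≤
      a * (∑ i, y i * x i) ^ e + b * (∑ i, y i * x' i) ^ e := by
    have hsum : ∑ i, y i * (a • x + b • x') i =
        a * ∑ i, y i * x i + b * ∑ i, y i * x' i := by
      simp only [Pi.add_apply, Pi.smul_apply, smul_eq_mul, mul_sum, ← sum_add_distrib]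
      exact sum_congr rfl fun i _ => by ring
    rw [hsum]
    exact he.convexOn_pow.2 (mem_univ _) (mem_univ _) ha hb hab
  have hx := (integrable_sum_mul_pow x e).const_mul a
  have hx' := (integrable_sum_mul_pow x' e).const_mul b
  have key : (e ! : ℝ) * completeHomogeneous e (a • x + b • x') ≤
      e ! * (a * completeHomogeneous e x + b * completeHomogeneous e x') := calc
    _ = ∫ y, (∑ i, y i * (a • x + b • x') i) ^ e
          ∂Measure.pi (fun _ : ι => expMeasure 1) :=
      (integral_sum_mul_pow _ e).symm
    _ ≤ ∫ y, a * (∑ i, y i * x i) ^ e + b * (∑ i, y i * x' i) ^ e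
          ∂Measure.pi (fun _ : ι => expMeasure 1) :=
      integral_mono (integrable_sum_mul_pow _ e) (hx.add hx') hpoint
    _ = _ := by
      rw [integral_add hx hx', integral_const_mul, integral_const_mul, integral_sum_mul_pow,
        integral_sum_mul_pow]
      ring
  exact le_of_mul_le_mul_left key (by positivity)

end CompleteHomogeneous

section IIDSample

variable {ι κ : Type*} [Fintype ι] [DecidableEq ι] [Fintype κ]

lemma sum_pi_prod_mul_prod (w : κ → ℝ) (f : ι → κ → ℝ) :
    ∑ a : ι → κ, (∏ i, w (a i)) * ∏ i, f i (a i) = ∏ i, ∑ j, w j * f i j := by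
  simp only [Fintype.prod_sum, prod_mul_distrib]

lemma ConvexOn.map_const_sum_le_sum_pi_prod {f : (ι → ℝ) → ℝ} (hf : ConvexOn ℝ univ f)
    {w : κ → ℝ} (hw0 : ∀ j, 0 ≤ w j) (hw1 : ∑ j, w j = 1) (X : κ → ℝ) :
    f (fun _ => ∑ j, w j * X j) ≤ ∑ a : ι → κ, (∏ i, w (a i)) * f (X ∘ a) := by
  have hW1 : ∑ a : ι → κ, ∏ i, w (a i) = 1 := by
    simpa [hw1] using sum_pi_prod_mul_prod w fun _ _ => (1 : ℝ)
  have hmean : ∑ a : ι → κ, (∏ i, w (a i)) • (X ∘ a) = fun _ => ∑ j, w j * X j := by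
    ext i₀
    calc (∑ a : ι → κ, (∏ i, w (a i)) • (X ∘ a)) i₀
        = ∑ a : ι → κ, (∏ i, w (a i)) * ∏ i, (if i = i₀ then X (a i) else 1) := by
          simp only [Fintype.prod_ite_eq', Finset.sum_apply, Pi.smul_apply, Function.comp_apply,
            smul_eq_mul]
      _ = ∏ i, ∑ j, w j * (if i = i₀ then X j else 1) :=
          sum_pi_prod_mul_prod w fun i j => if i = i₀ then X j else 1
      _ = ∑ j, w j * X j := by
          simp only [mul_ite, mul_one, sum_ite_irrel, hw1, Fintype.prod_ite_eq']
  simpa [hmean] using hf.map_sum_le (t := univ) (p := fun a => X ∘ a)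
    (fun a _ => prod_nonneg fun i _ => hw0 (a i)) hW1 (fun _ _ => mem_univ _)

end IIDSample

lemma sum_prod_moments_sub_pow_nonneg {κ : Type*} [Fintype κ] {w : κ → ℝ}
    (hw0 : ∀ j, 0 ≤ w j) (hw1 : ∑ j, w j = 1) (X : κ → ℝ) (n : ℕ) {e : ℕ}
    (he : Even e) :
    0 ≤ ∑ ℓ ∈ Nat.antidiagonalTuple n e,
      ((∏ i, ∑ j, w j * X j ^ ℓ i) - (∑ j, w j * X j) ^ e) := by
  rw [← piAntidiag_univ_fin_eq_antidiagonalTuple, sum_sub_distrib, sub_nonneg]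
  calc ∑ ℓ ∈ piAntidiag univ e, (∑ j, w j * X j) ^ e
      = completeHomogeneous e fun _ : Fin n => ∑ j, w j * X j :=
        sum_congr rfl fun ℓ hℓ => by rw [prod_pow_eq_pow_sum, (mem_piAntidiag.mp hℓ).1]
    _ ≤ ∑ a : Fin n → κ, (∏ i, w (a i)) * completeHomogeneous e (X ∘ a) :=
        (convexOn_completeHomogeneous he).map_const_sum_le_sum_pi_prod hw0 hw1 X
    _ = ∑ ℓ ∈ piAntidiag univ e, ∏ i, ∑ j, w j * X j ^ ℓ i := by
        simp only [completeHomogeneous, mul_sum, Function.comp_apply]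
        rw [sum_comm]
        exact sum_congr rfl fun ℓ _ => sum_pi_prod_mul_prod w fun i j => X j ^ ℓ i

theorem moment_even_subgraph_sum_nonneg_general (N m : ℕ)
    (w X : Fin N → ℝ) (hw : ∀ i, 0 ≤ w i) (hw1 : ∑ i, w i = 1) :
    0 ≤ ∑ d ∈ Finset.Icc 1 (m / 2),
        ∑ ℓ ∈ Finset.Nat.antidiagonalTuple (m - 2 * d + 1) (2 * d),
          ((∏ i, (∑ j, w j * X j ^ ℓ i)) - (∑ j, w j * X j) ^ (2 * d)) :=
  sum_nonneg fun d _ => sum_prod_moments_sub_pow_nonneg hw hw1 X _ (even_two_mul d)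

/-- Moment form of inequality (5) of the paper: for a finitely valued random variable
`X` with mean `μ`,
`Σ_{d=1}^{⌊m/2⌋} Σ_{ℓ_1+⋯+ℓ_{m-2d+1}=2d} (Π_i E[X^{ℓ_i}] − μ^{2d}) ≥ 0`. -/
theorem moment_even_subgraph_sum_nonneg (N m : ℕ) (hN : 1 ≤ N) (hm : 2 ≤ m)
    (w X : Fin N → ℝ) (hw : ∀ i, 0 ≤ w i) (hw1 : ∑ i, w i = 1) :
    0 ≤ ∑ d ∈ Finset.Icc 1 (m / 2),
        ∑ ℓ ∈ Finset.Nat.antidiagonalTuple (m - 2 * d + 1) (2 * d),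
          ((∏ i, (∑ j, w j * X j ^ ℓ i)) - (∑ j, w j * X j) ^ (2 * d)) :=
  moment_even_subgraph_sum_nonneg_general N m w X hw hw1
end
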